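/- arXiv:1811.12655 — 5 statements merged into one kernel-verified Lean document; each statement's English description precedes it below -/
import Mathlib

section
/- Let R_i denote the largest index k with i ≤ k ≤ m that minimizes Avg(i,k) over k ∈ {i, ..., m}. Then the intervals [1,R_1], ..., [m,R_m] do not partially intersect: for all indices i, j with 1 ≤ i < j ≤ m, if j ≤ R_i then R_j ≤ R_i. -/
/-!
Write `A = Avg(i, R i)` and suppose `R i < R j` with `j ≤ R i`. The average over a union of two
adjacent intervals is a weighted mean of the two averages, with positive weights. Splitting
`[i, R i]` at `j` and using `Avg(i, j-1) ≥ A` gives `Avg(j, R i) ≤ A`; splitting `[i, R j]` at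
`R i` and using `Avg(i, R j) > A` (maximality of `R i`) gives `Avg(R i + 1, R j) > A`. Hence
splitting `[j, R j]` at `R i` yields `Avg(j, R j) > Avg(j, R i)`, contradicting the minimality
of `R j`.
-/

/-- Virtual cost of the uniform distribution over `{c 1, …, c m}`:
`ψ i = i·c i − (i−1)·c (i−1)`. -/
noncomputable def vc (c : ℕ → ℝ) (i : ℕ) : ℝ :=
  (i : ℝ) * c i - ((i : ℝ) - 1) * c (i - 1)

/-- `Avg(i,k) = (1/(k−i+1))·Σ_{j=i}^{k} ψ_j`. -/
noncomputable def avg (c : ℕ → ℝ) (i k : ℕ) : ℝ :=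
  (∑ j ∈ Finset.Icc i k, vc c j) / ((k : ℝ) - (i : ℝ) + 1)

open Finset

noncomputable def intervalAvg (f : ℕ → ℝ) (i k : ℕ) : ℝ :=
  (∑ j ∈ Icc i k, f j) / ((k : ℝ) - i + 1)

theorem avg_eq_intervalAvg (c : ℕ → ℝ) : avg c = intervalAvg (vc c) := rfl

section WeightedMean

variable {p q a b x : ℝ}

theorem lt_weightedMean_iff (hp : 0 ≤ p) (hq : 0 < q) (hx : (p + q) * x = p * a + q * b) :
    a < x ↔ a < b := by
  have hx' : (p + q) * (x - a) = q * (b - a) := by linarith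
  rw [← sub_pos, ← sub_pos (a := b), ← mul_pos_iff_of_pos_left (by linarith : 0 < p + q), hx',
    mul_pos_iff_of_pos_left hq]

theorem weightedMean_lt_iff (hp : 0 < p) (hq : 0 ≤ q) (hx : (p + q) * x = p * a + q * b) :
    x < b ↔ a < b := by
  have hx' : (p + q) * (b - x) = p * (b - a) := by linarith
  rw [← sub_pos, ← sub_pos (a := b), ← mul_pos_iff_of_pos_left (by linarith : 0 < p + q), hx',
    mul_pos_iff_of_pos_left hp]

end WeightedMean

namespace intervalAvg

variable {i k l : ℕ}

theorem mul_length (f : ℕ → ℝ) (h : i ≤ k + 1) :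
    ((k : ℝ) - i + 1) * intervalAvg f i k = ∑ j ∈ Icc i k, f j := by
  rcases Nat.lt_or_ge k i with hk | hk
  · obtain rfl : i = k + 1 := by omega
    simp
  · have : (i : ℝ) ≤ k := by exact_mod_cast hk
    exact mul_div_cancel₀ _ (by linarith)

theorem split (f : ℕ → ℝ) (hik : i ≤ k + 1) (hkl : k ≤ l) :
    (((k : ℝ) - i + 1) + ((l : ℝ) - k)) * intervalAvg f i l =
      ((k : ℝ) - i + 1) * intervalAvg f i k + ((l : ℝ) - k) * intervalAvg f (k + 1) l := by
  have hsum : ∑ j ∈ Icc i l, f j = ∑ j ∈ Icc i k, f j + ∑ j ∈ Icc (k + 1) l, f j := by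
    simp only [← Ico_add_one_right_eq_Icc]
    exact (sum_Ico_consecutive f hik (by omega)).symm
  have hright : ((l : ℝ) - k) * intervalAvg f (k + 1) l = ∑ j ∈ Icc (k + 1) l, f j := by
    have := mul_length f (i := k + 1) (k := l) (by omega)
    push_cast at this
    linarith
  rw [mul_length f hik, hright, ← hsum, ← mul_length f (by omega)]
  ring

theorem left_lt_whole_iff (f : ℕ → ℝ) (hik : i ≤ k) (hkl : k < l) :
    intervalAvg f i k < intervalAvg f i l ↔ intervalAvg f i k < intervalAvg f (k + 1) l := by
  have : (i : ℝ) ≤ k := by exact_mod_cast hik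
  have : (k : ℝ) < l := by exact_mod_cast hkl
  exact lt_weightedMean_iff (by linarith) (by linarith) (split f (by omega) hkl.le)

theorem whole_lt_right_iff (f : ℕ → ℝ) (hik : i ≤ k) (hkl : k < l) :
    intervalAvg f i l < intervalAvg f (k + 1) l ↔ intervalAvg f i k < intervalAvg f (k + 1) l := by
  have : (i : ℝ) ≤ k := by exact_mod_cast hik
  have : (k : ℝ) < l := by exact_mod_cast hkl
  exact weightedMean_lt_iff (by linarith) (by linarith) (split f (by omega) hkl.le)

theorem right_le_whole_of_whole_le_left (f : ℕ → ℝ) (hik : i ≤ k) (hkl : k < l)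
    (h : intervalAvg f i l ≤ intervalAvg f i k) : intervalAvg f (k + 1) l ≤ intervalAvg f i l :=
  not_lt.1 fun hlt ↦
    h.not_gt ((left_lt_whole_iff f hik hkl).2 ((whole_lt_right_iff f hik hkl).1 hlt))

end intervalAvg

theorem stmt0_general (m : ℕ) (c : ℕ → ℝ)
    (R : ℕ → ℕ)
    (hRmem : ∀ i, 1 ≤ i → i ≤ m → i ≤ R i ∧ R i ≤ m)
    (hRmin : ∀ i, 1 ≤ i → i ≤ m → ∀ k, i ≤ k → k ≤ m → avg c i (R i) ≤ avg c i k)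
    (hRmax : ∀ i, 1 ≤ i → i ≤ m → ∀ k, i ≤ k → k ≤ m → avg c i k = avg c i (R i) → k ≤ R i)
    (i j : ℕ) (hi : 1 ≤ i) (hij : i < j) (hjm : j ≤ m) (hjR : j ≤ R i) :
    R j ≤ R i := by
  simp only [avg_eq_intervalAvg] at hRmin hRmax
  by_contra! hRij
  have him : i ≤ m := by omega
  have hRjm : R j ≤ m := (hRmem j (by omega) hjm).2
  have hAvg_i : intervalAvg (vc c) i (R i) < intervalAvg (vc c) i (R j) :=
    (hRmin i hi him (R j) (by omega) hRjm).lt_of_ne fun h ↦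
      (hRmax i hi him (R j) (by omega) hRjm h.symm).not_gt hRij
  have hTail : intervalAvg (vc c) i (R i) < intervalAvg (vc c) (R i + 1) (R j) :=
    (intervalAvg.left_lt_whole_iff _ (by omega) hRij).1 hAvg_i
  have hHead : intervalAvg (vc c) j (R i) ≤ intervalAvg (vc c) i (R i) := by
    have := intervalAvg.right_le_whole_of_whole_le_left (vc c) (k := j - 1) (by omega) (by omega)
      (hRmin i hi him (j - 1) (by omega) (by omega))
    rwa [Nat.sub_add_cancel (by omega)] at this
  have hAvg_j : intervalAvg (vc c) j (R i) < intervalAvg (vc c) j (R j) :=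
    (intervalAvg.left_lt_whole_iff _ hjR hRij).2 (hHead.trans_lt hTail)
  exact (hRmin j (by omega) hjm (R i) hjR (by omega)).not_gt hAvg_j

/-- the intervals `[i, R i]` do not partially intersect. -/
theorem stmt0 (m : ℕ) (hm : 1 ≤ m) (c : ℕ → ℝ) (hc0 : c 0 = 0)
    (hmono : ∀ i j, i ≤ j → j ≤ m → c i ≤ c j)
    (R : ℕ → ℕ)
    (hRmem : ∀ i, 1 ≤ i → i ≤ m → i ≤ R i ∧ R i ≤ m)
    (hRmin : ∀ i, 1 ≤ i → i ≤ m → ∀ k, i ≤ k → k ≤ m → avg c i (R i) ≤ avg c i k)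
    (hRmax : ∀ i, 1 ≤ i → i ≤ m → ∀ k, i ≤ k → k ≤ m → avg c i k = avg c i (R i) → k ≤ R i)
    (i j : ℕ) (hi : 1 ≤ i) (hij : i < j) (hjm : j ≤ m) (hjR : j ≤ R i) :
    R j ≤ R i :=
  stmt0_general m c R hRmem hRmin hRmax i j hi hij hjm hjR
end

section
/- Let R_i denote the largest index k with i ≤ k ≤ m that minimizes Avg(i,k) over k ∈ {i, ..., m}. Then for any indices i, j with 1 ≤ i ≤ j ≤ R_i, one has Avg(j, R_j) ≤ Avg(i, R_i); equivalently, ψ'_j ≤ ψ'_i for every j contained in the interval [i, R_i]. -/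
lemma avg_mul_length (c : ℕ → ℝ) {i k : ℕ} (hik : i ≤ k) :
    avg c i k * ((k : ℝ) - i + 1) = ∑ j ∈ Finset.Icc i k, vc c j := by
  have hlen : (0 : ℝ) < (k : ℝ) - i + 1 := by
    have : (i : ℝ) ≤ k := by exact_mod_cast hik
    linarith
  exact div_mul_cancel₀ _ hlen.ne'

lemma sum_vc_Icc_split (c : ℕ → ℝ) {i j k : ℕ} (hj : 1 ≤ j) (hij : i ≤ j) (hjk : j ≤ k + 1) :
    ∑ l ∈ Finset.Icc i k, vc c l =
      ∑ l ∈ Finset.Icc i (j - 1), vc c l + ∑ l ∈ Finset.Icc j k, vc c l := by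
  rw [← Finset.Ico_add_one_right_eq_Icc i k, ← Finset.Ico_add_one_right_eq_Icc i (j - 1),
    ← Finset.Ico_add_one_right_eq_Icc j k, Nat.sub_add_cancel hj,
    Finset.sum_Ico_consecutive _ hij hjk]

lemma avg_mul_length_split (c : ℕ → ℝ) {i j k : ℕ} (hij : i < j) (hjk : j ≤ k) :
    avg c i k * ((k : ℝ) - i + 1) =
      avg c i (j - 1) * ((j : ℝ) - i) + avg c j k * ((k : ℝ) - j + 1) := by
  have hcast : ((j - 1 : ℕ) : ℝ) = (j : ℝ) - 1 := by
    rw [Nat.cast_sub (by omega), Nat.cast_one]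
  rw [avg_mul_length c (by omega), avg_mul_length c hjk,
    sum_vc_Icc_split c (by omega) hij.le (by omega), ← avg_mul_length c (by omega : i ≤ j - 1),
    hcast]
  ring

lemma avg_suffix_le_of_avg_le_avg_prefix (c : ℕ → ℝ) {i j k : ℕ} (hij : i < j) (hjk : j ≤ k)
    (hmin : avg c i k ≤ avg c i (j - 1)) : avg c j k ≤ avg c i k := by
  have hsplit := avg_mul_length_split c hij hjk
  have hprefix : (0 : ℝ) < (j : ℝ) - i := by
    have : (i : ℝ) < j := by exact_mod_cast hij
    linarith
  have hsuffix : (0 : ℝ) < (k : ℝ) - j + 1 := by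
    have : (j : ℝ) ≤ k := by exact_mod_cast hjk
    linarith
  -- `Avg(j,k)·b = Avg(i,k)·(a + b) − Avg(i,j−1)·a ≤ Avg(i,k)·b`
  have hweighted : avg c j k * ((k : ℝ) - j + 1) ≤ avg c i k * ((k : ℝ) - j + 1) := by
    nlinarith
  exact le_of_mul_le_mul_right hweighted hsuffix

theorem stmt1_general (m : ℕ) (c : ℕ → ℝ)
    (R : ℕ → ℕ)
    (hRmem : ∀ i, 1 ≤ i → i ≤ m → i ≤ R i ∧ R i ≤ m)
    (hRmin : ∀ i, 1 ≤ i → i ≤ m → ∀ k, i ≤ k → k ≤ m → avg c i (R i) ≤ avg c i k)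
    (i j : ℕ) (hi : 1 ≤ i) (him : i ≤ m) (hij : i ≤ j) (hjR : j ≤ R i) :
    avg c j (R j) ≤ avg c i (R i) := by
  obtain ⟨hiR, hRm⟩ := hRmem i hi him
  have hjm : j ≤ m := hjR.trans hRm
  calc avg c j (R j) ≤ avg c j (R i) := hRmin j (hi.trans hij) hjm (R i) hjR hRm
    _ ≤ avg c i (R i) := by
      rcases hij.eq_or_lt with rfl | hlt
      · exact le_rfl
      · exact avg_suffix_le_of_avg_le_avg_prefix c hlt hjR
          (hRmin i hi him (j - 1) (by omega) (by omega))

/-- for any `j` contained in `[i, R i]`, `Avg(j, R j) ≤ Avg(i, R i)`. -/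
theorem stmt1 (m : ℕ) (hm : 1 ≤ m) (c : ℕ → ℝ) (hc0 : c 0 = 0)
    (hmono : ∀ i j, i ≤ j → j ≤ m → c i ≤ c j)
    (R : ℕ → ℕ)
    (hRmem : ∀ i, 1 ≤ i → i ≤ m → i ≤ R i ∧ R i ≤ m)
    (hRmin : ∀ i, 1 ≤ i → i ≤ m → ∀ k, i ≤ k → k ≤ m → avg c i (R i) ≤ avg c i k)
    (hRmax : ∀ i, 1 ≤ i → i ≤ m → ∀ k, i ≤ k → k ≤ m → avg c i k = avg c i (R i) → k ≤ R i)
    (i j : ℕ) (hi : 1 ≤ i) (him : i ≤ m) (hij : i ≤ j) (hjR : j ≤ R i) :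
    avg c j (R j) ≤ avg c i (R i) :=
  stmt1_general m c R hRmem hRmin i j hi him hij hjR
end

section
/- Let R_i denote the largest index k with i ≤ k ≤ m that minimizes Avg(i,k) over k ∈ {i, ..., m}. Fix an index i with 1 ≤ i ≤ m and suppose the interval [i, R_i] is not contained in any other such interval, i.e., R_j < i for every j < i. Then for every j < i one has Avg(j, R_j) < Avg(i, R_i), i.e., ψ'_j < ψ'_i. -/
/-!
Passing from `[j, R j]` to the adjacent block `[R j + 1, R (R j + 1)]` strictly raises the
average: since `R j` is the last minimiser of `Avg(j, ·)`, the average over `[j, R (R j + 1)]`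
exceeds that over `[j, R j]`, and the former is a weighted mean of the averages over the two
blocks. When `[i, R i]` is maximal, the blocks starting at `j < i` hop in this way to `i`
without overshooting, so `Avg(j, R j) < Avg(i, R i)`.
-/

theorem Finset.sum_Icc_add_sum_Icc_succ {M : Type*} [AddCommMonoid M] (f : ℕ → M)
    {j r k : ℕ} (hjr : j ≤ r + 1) (hrk : r ≤ k) :
    ∑ x ∈ Icc j r, f x + ∑ x ∈ Icc (r + 1) k, f x = ∑ x ∈ Icc j k, f x := by
  rw [← sum_union (disjoint_left.2 fun x hx hx' ↦ by simp only [mem_Icc] at hx hx'; omega)]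
  congr 1
  ext x
  simp only [mem_union, mem_Icc]
  omega

theorem avg_lt_avg_succ_of_avg_lt (c : ℕ → ℝ) {j r k : ℕ} (hjr : j ≤ r) (hrk : r < k)
    (h : avg c j r < avg c j k) : avg c j r < avg c (r + 1) k := by
  unfold avg at h ⊢
  rw [← Finset.sum_Icc_add_sum_Icc_succ _ (by omega) hrk.le] at h
  have hjr' : (j : ℝ) ≤ r := by exact_mod_cast hjr
  have hrk' : (r : ℝ) + 1 ≤ k := by exact_mod_cast hrk
  rw [div_lt_div_iff₀ (by linarith) (by linarith)] at h
  rw [div_lt_div_iff₀ (by linarith) (by push_cast; linarith)]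
  push_cast
  nlinarith

structure IsLastAvgMinimizer (c : ℕ → ℝ) (m : ℕ) (R : ℕ → ℕ) : Prop where
  mem : ∀ i, 1 ≤ i → i ≤ m → i ≤ R i ∧ R i ≤ m
  min : ∀ i, 1 ≤ i → i ≤ m → ∀ k, i ≤ k → k ≤ m → avg c i (R i) ≤ avg c i k
  max : ∀ i, 1 ≤ i → i ≤ m → ∀ k, i ≤ k → k ≤ m → avg c i k = avg c i (R i) → k ≤ R i

namespace IsLastAvgMinimizer

variable {c : ℕ → ℝ} {m : ℕ} {R : ℕ → ℕ}

theorem avg_lt_of_lt (hR : IsLastAvgMinimizer c m R) {j k : ℕ} (hj : 1 ≤ j) (hjm : j ≤ m)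
    (hk : R j < k) (hkm : k ≤ m) : avg c j (R j) < avg c j k := by
  have hjk : j ≤ k := (hR.mem j hj hjm).1.trans hk.le
  refine (hR.min j hj hjm k hjk hkm).lt_of_ne fun heq ↦ ?_
  exact absurd (hR.max j hj hjm k hjk hkm heq.symm) hk.not_ge

theorem avg_lt_avg_next (hR : IsLastAvgMinimizer c m R) {j : ℕ} (hj : 1 ≤ j) (hjm : j ≤ m)
    (hRm : R j < m) : avg c j (R j) < avg c (R j + 1) (R (R j + 1)) := by
  obtain ⟨hjR, -⟩ := hR.mem j hj hjm
  obtain ⟨hR', hR'm⟩ := hR.mem (R j + 1) (by omega) hRm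
  exact avg_lt_avg_succ_of_avg_lt c hjR hR' (hR.avg_lt_of_lt hj hjm hR' hR'm)

theorem avg_lt_of_maximal (hR : IsLastAvgMinimizer c m R) {i : ℕ} (him : i ≤ m)
    (hmax : ∀ j, 1 ≤ j → j < i → R j < i) {j : ℕ} (hj : 1 ≤ j) (hji : j < i) :
    avg c j (R j) < avg c i (R i) := by
  have hnext := hR.avg_lt_avg_next hj (by omega) (by linarith [hmax j hj hji])
  rcases (show R j + 1 ≤ i from hmax j hj hji).eq_or_lt with hstop | hhop
  · rwa [hstop] at hnext
  · exact hnext.trans (hR.avg_lt_of_maximal him hmax (by omega) hhop)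
termination_by i - j
decreasing_by have := (hR.mem j hj (by omega)).1; omega

end IsLastAvgMinimizer

theorem stmt2_general (m : ℕ) (c : ℕ → ℝ)
    (R : ℕ → ℕ)
    (hRmem : ∀ i, 1 ≤ i → i ≤ m → i ≤ R i ∧ R i ≤ m)
    (hRmin : ∀ i, 1 ≤ i → i ≤ m → ∀ k, i ≤ k → k ≤ m → avg c i (R i) ≤ avg c i k)
    (hRmax : ∀ i, 1 ≤ i → i ≤ m → ∀ k, i ≤ k → k ≤ m → avg c i k = avg c i (R i) → k ≤ R i)
    (i : ℕ) (him : i ≤ m)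
    (hmax : ∀ j, 1 ≤ j → j < i → R j < i) :
    ∀ j, 1 ≤ j → j < i → avg c j (R j) < avg c i (R i) :=
  fun _ hj hji ↦ (IsLastAvgMinimizer.mk hRmem hRmin hRmax).avg_lt_of_maximal him hmax hj hji

/-- if `[i, R i]` is maximal (not contained in any other interval),
then `Avg(j, R j) < Avg(i, R i)` for every `j < i`. -/
theorem stmt2 (m : ℕ) (hm : 1 ≤ m) (c : ℕ → ℝ) (hc0 : c 0 = 0)
    (hmono : ∀ i j, i ≤ j → j ≤ m → c i ≤ c j)
    (R : ℕ → ℕ)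
    (hRmem : ∀ i, 1 ≤ i → i ≤ m → i ≤ R i ∧ R i ≤ m)
    (hRmin : ∀ i, 1 ≤ i → i ≤ m → ∀ k, i ≤ k → k ≤ m → avg c i (R i) ≤ avg c i k)
    (hRmax : ∀ i, 1 ≤ i → i ≤ m → ∀ k, i ≤ k → k ≤ m → avg c i k = avg c i (R i) → k ≤ R i)
    (i : ℕ) (hi : 1 ≤ i) (him : i ≤ m)
    (hmax : ∀ j, 1 ≤ j → j < i → R j < i) :
    ∀ j, 1 ≤ j → j < i → avg c j (R j) < avg c i (R i) :=
  stmt2_general m c R hRmem hRmin hRmax i him hmax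
end

section
/- For any index i with 1 ≤ i ≤ m, let I_i = {j ∈ {1, ..., m} : φ_j = φ_i} be the level set of the regularized virtual cost containing i. Then Σ_{j ∈ I_i} φ_j = Σ_{j ∈ I_i} ψ_j; i.e., on each level set of φ, the sum of the regularized virtual costs equals the sum of the virtual costs. -/
open scoped Classical

/-- `ψ'_i = min_{i ≤ k ≤ m} Avg(i,k)`. -/
noncomputable def rvcAux (m : ℕ) (c : ℕ → ℝ) (i : ℕ) : ℝ :=
  sInf {x | ∃ k, i ≤ k ∧ k ≤ m ∧ x = avg c i k}

/-- Regularized virtual cost: `φ_i = max_{1 ≤ j ≤ i} ψ'_j`. -/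
noncomputable def rvc (m : ℕ) (c : ℕ → ℝ) (i : ℕ) : ℝ :=
  sSup {x | ∃ j, 1 ≤ j ∧ j ≤ i ∧ x = rvcAux m c j}

/-!
The regularized cost `φ` is nondecreasing, so the level set of `φ_i` is an interval `[a, b]`
on which `φ = v`. At its left end the maximum defining `φ_a` is attained at `a` itself, so
`v = ψ'_a ≤ Avg(a, b)`. Conversely, for `j ∈ [a, b]` take a window `[j, k]` realizing
`ψ'_j ≤ v`: if `k ≤ b`, recurse on `[k + 1, b]`; if `k > b`, the excess window `[b + 1, k]`
averages at least `ψ'_{b+1} = φ_{b+1} > v`, so `[j, b]` averages at most `v`. Hence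
`Σ_{[a,b]} ψ = (b - a + 1) v = Σ_{[a,b]} φ`.
-/

open Finset

theorem Finset.sum_Icc_consecutive {M : Type*} [AddCommMonoid M] (f : ℕ → M) {i k n : ℕ}
    (hik : i ≤ k + 1) (hkn : k ≤ n) :
    ∑ j ∈ Icc i k, f j + ∑ j ∈ Icc (k + 1) n, f j = ∑ j ∈ Icc i n, f j := by
  simpa only [← Finset.Ico_add_one_right_eq_Icc] using
    Finset.sum_Ico_consecutive f hik (Nat.add_le_add_right hkn 1)

theorem Finset.filter_eq_Icc_of_monotoneOn {α : Type*} [PartialOrder α] {f : ℕ → α}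
    {p q i : ℕ} (hf : MonotoneOn f (Set.Icc p q)) (hi : i ∈ Icc p q)
    [DecidablePred fun j => f j = f i] :
    ∃ a b, a ∈ (Icc p q).filter (f · = f i) ∧ b ∈ (Icc p q).filter (f · = f i) ∧
      (Icc p q).filter (f · = f i) = Icc a b := by
  set T := (Icc p q).filter (f · = f i)
  have hT : T.Nonempty := ⟨i, mem_filter.2 ⟨hi, rfl⟩⟩
  refine ⟨T.min' hT, T.max' hT, T.min'_mem hT, T.max'_mem hT, ?_⟩
  obtain ⟨haI, ha⟩ := mem_filter.1 (T.min'_mem hT)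
  obtain ⟨hbI, hb⟩ := mem_filter.1 (T.max'_mem hT)
  rw [mem_Icc] at haI hbI
  ext j
  refine ⟨fun hj => mem_Icc.2 ⟨T.min'_le j hj, T.le_max' j hj⟩, fun hj => ?_⟩
  obtain ⟨haj, hjb⟩ := mem_Icc.1 hj
  have hjI : j ∈ Set.Icc p q := ⟨haI.1.trans haj, hjb.trans hbI.2⟩
  refine mem_filter.2 ⟨mem_Icc.2 hjI, le_antisymm ?_ ?_⟩
  · exact hb ▸ hf hjI ⟨hbI.1, hbI.2⟩ hjb
  · exact ha ▸ hf ⟨haI.1, haI.2⟩ hjI haj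

section RegularizedCost

variable {m : ℕ} {c : ℕ → ℝ}

theorem finite_avg_window (m : ℕ) (c : ℕ → ℝ) (i : ℕ) :
    {x | ∃ k, i ≤ k ∧ k ≤ m ∧ x = avg c i k}.Finite :=
  ((Set.finite_Icc i m).image (avg c i)).subset <| by
    rintro x ⟨k, hik, hkm, rfl⟩
    exact ⟨k, ⟨hik, hkm⟩, rfl⟩

theorem finite_rvcAux_prefix (m : ℕ) (c : ℕ → ℝ) (i : ℕ) :
    {x | ∃ j, 1 ≤ j ∧ j ≤ i ∧ x = rvcAux m c j}.Finite :=
  ((Set.finite_Icc 1 i).image (rvcAux m c)).subset <| by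
    rintro x ⟨j, h1j, hji, rfl⟩
    exact ⟨j, ⟨h1j, hji⟩, rfl⟩

theorem rvcAux_le_avg {i k : ℕ} (hik : i ≤ k) (hkm : k ≤ m) : rvcAux m c i ≤ avg c i k :=
  csInf_le (finite_avg_window m c i).bddBelow ⟨k, hik, hkm, rfl⟩

theorem exists_rvcAux_eq_avg {i : ℕ} (him : i ≤ m) :
    ∃ k, i ≤ k ∧ k ≤ m ∧ rvcAux m c i = avg c i k :=
  Set.Nonempty.csInf_mem (by exact ⟨_, i, le_rfl, him, rfl⟩) (finite_avg_window m c i)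

theorem avg_mul_eq_sum {i k : ℕ} (hik : i ≤ k) :
    avg c i k * ((k : ℝ) - i + 1) = ∑ j ∈ Icc i k, vc c j := by
  have hik' : (i : ℝ) ≤ k := Nat.cast_le.2 hik
  exact div_mul_cancel₀ _ (by linarith)

theorem rvcAux_mul_le_sum {i k : ℕ} (hik : i ≤ k) (hkm : k ≤ m) :
    rvcAux m c i * ((k : ℝ) - i + 1) ≤ ∑ j ∈ Icc i k, vc c j := by
  have hik' : (i : ℝ) ≤ k := Nat.cast_le.2 hik
  rw [← avg_mul_eq_sum hik]
  exact mul_le_mul_of_nonneg_right (rvcAux_le_avg hik hkm) (by linarith)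

theorem rvcAux_le_rvc {i j : ℕ} (hj : 1 ≤ j) (hji : j ≤ i) : rvcAux m c j ≤ rvc m c i :=
  le_csSup (finite_rvcAux_prefix m c i).bddAbove ⟨j, hj, hji, rfl⟩

theorem exists_rvc_eq_rvcAux {i : ℕ} (hi : 1 ≤ i) :
    ∃ j, 1 ≤ j ∧ j ≤ i ∧ rvc m c i = rvcAux m c j :=
  Set.Nonempty.csSup_mem (by exact ⟨_, 1, le_rfl, hi, rfl⟩) (finite_rvcAux_prefix m c i)

theorem rvc_monotoneOn : MonotoneOn (rvc m c) (Set.Ici 1) := by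
  intro i hi i' _ hii'
  refine csSup_le_csSup (finite_rvcAux_prefix m c i').bddAbove ⟨_, 1, le_rfl, hi, rfl⟩ ?_
  rintro x ⟨j, h1j, hji, rfl⟩
  exact ⟨j, h1j, hji.trans hii', rfl⟩

theorem rvc_eq_rvcAux {i : ℕ} (hi : 1 ≤ i)
    (hnew : ∀ j, 1 ≤ j → j < i → rvc m c j ≠ rvc m c i) : rvc m c i = rvcAux m c i := by
  obtain ⟨j, h1j, hji, hmax⟩ := exists_rvc_eq_rvcAux (m := m) (c := c) hi
  obtain rfl | hlt := hji.eq_or_lt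
  · exact hmax
  · refine absurd (le_antisymm ?_ ?_) (hnew j h1j hlt)
    · exact rvc_monotoneOn (Set.mem_Ici.2 h1j) (Set.mem_Ici.2 hi) hji
    · exact hmax ▸ rvcAux_le_rvc h1j le_rfl

theorem sum_vc_le_of_rvcAux_le {v : ℝ} {j b : ℕ} (hjb : j ≤ b + 1) (hbm : b ≤ m)
    (hle : ∀ x, j ≤ x → x ≤ b → rvcAux m c x ≤ v)
    (hnext : b < m → v ≤ rvcAux m c (b + 1)) :
    ∑ x ∈ Icc j b, vc c x ≤ v * ((b : ℝ) - j + 1) := by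
  obtain rfl | hjb := hjb.eq_or_lt
  · simp
  obtain ⟨k, hjk, hkm, hk⟩ := exists_rvcAux_eq_avg (c := c) (by omega : j ≤ m)
  have hjk' : (j : ℝ) ≤ k := Nat.cast_le.2 hjk
  have hwindow : ∑ x ∈ Icc j k, vc c x ≤ v * ((k : ℝ) - j + 1) := by
    rw [← avg_mul_eq_sum hjk, ← hk]
    exact mul_le_mul_of_nonneg_right (hle j le_rfl (by omega)) (by linarith)
  rcases le_or_gt k b with hkb | hbk
  · have htail := sum_vc_le_of_rvcAux_le (j := k + 1) (by omega) hbm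
      (fun x hx hxb => hle x (by omega) hxb) hnext
    rw [← Finset.sum_Icc_consecutive _ (by omega) hkb]
    push_cast at htail
    linarith
  · have hexcess := rvcAux_mul_le_sum (m := m) (c := c) hbk hkm
    have hbk' : (b : ℝ) + 1 ≤ k := by exact_mod_cast hbk
    have hv := mul_le_mul_of_nonneg_right (hnext (by omega)) (by linarith : (0 : ℝ) ≤ k - b)
    rw [← Finset.sum_Icc_consecutive _ (by omega) hbk.le] at hwindow
    push_cast at hexcess
    nlinarith
termination_by b + 1 - j

theorem sum_vc_eq_of_level_interval {v : ℝ} {a b : ℕ} (ha : 1 ≤ a) (hab : a ≤ b)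
    (hbm : b ≤ m) (hlevel : ∀ x, a ≤ x → x ≤ b → rvc m c x = v)
    (hleft : ∀ j, 1 ≤ j → j < a → rvc m c j ≠ v) (hright : b < m → v < rvc m c (b + 1)) :
    ∑ x ∈ Icc a b, vc c x = v * ((b : ℝ) - a + 1) := by
  have hva : rvcAux m c a = v :=
    hlevel a le_rfl hab ▸ (rvc_eq_rvcAux ha (hlevel a le_rfl hab ▸ hleft)).symm
  refine le_antisymm (sum_vc_le_of_rvcAux_le (by omega) hbm ?_ fun hb => ?_) ?_
  · exact fun x hax hxb => hlevel x hax hxb ▸ rvcAux_le_rvc (ha.trans hax) le_rfl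
  · have hb1 : rvc m c (b + 1) = rvcAux m c (b + 1) := by
      refine rvc_eq_rvcAux (by omega) fun j h1j hjb => (lt_of_le_of_lt ?_ (hright hb)).ne
      exact hlevel b hab le_rfl ▸
        rvc_monotoneOn (Set.mem_Ici.2 h1j) (Set.mem_Ici.2 (ha.trans hab)) (by omega)
    exact hb1 ▸ (hright hb).le
  · exact hva ▸ rvcAux_mul_le_sum hab hbm

end RegularizedCost

theorem stmt3_general (m : ℕ) (c : ℕ → ℝ)
    (i : ℕ) (hi : 1 ≤ i) (him : i ≤ m) :
    ∑ j ∈ (Finset.Icc 1 m).filter (fun j => rvc m c j = rvc m c i), rvc m c j =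
      ∑ j ∈ (Finset.Icc 1 m).filter (fun j => rvc m c j = rvc m c i), vc c j := by
  have hmono : MonotoneOn (rvc m c) (Set.Icc 1 m) :=
    rvc_monotoneOn.mono fun j hj => Set.mem_Ici.2 hj.1
  obtain ⟨a, b, ha, hb, hT⟩ := Finset.filter_eq_Icc_of_monotoneOn hmono (mem_Icc.2 ⟨hi, him⟩)
  have hmem : ∀ j, (1 ≤ j ∧ j ≤ m) ∧ rvc m c j = rvc m c i ↔ a ≤ j ∧ j ≤ b := fun j => by
    rw [← mem_Icc (a := a), ← hT, mem_filter, mem_Icc]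
  rw [mem_filter, mem_Icc] at ha hb
  have hab : a ≤ b := ((hmem a).1 ha).2
  have hlevel : ∀ x, a ≤ x → x ≤ b → rvc m c x = rvc m c i := fun x hax hxb =>
    ((hmem x).2 ⟨hax, hxb⟩).2
  have hleft : ∀ j, 1 ≤ j → j < a → rvc m c j ≠ rvc m c i := fun j h1j hja hj =>
    absurd ((hmem j).1 ⟨⟨h1j, by omega⟩, hj⟩).1 (by omega)
  have hright : b < m → rvc m c i < rvc m c (b + 1) := fun hbm =>
    (hb.2 ▸ hmono hb.1 ⟨by omega, hbm⟩ (by omega)).lt_of_ne fun hj =>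
      absurd ((hmem (b + 1)).1 ⟨⟨by omega, hbm⟩, hj.symm⟩).2 (by omega)
  rw [hT, sum_vc_eq_of_level_interval ha.1.1 hab hb.1.2 hlevel hleft hright,
    sum_congr rfl fun x hx => hlevel x (mem_Icc.1 hx).1 (mem_Icc.1 hx).2,
    sum_const, Nat.card_Icc, nsmul_eq_mul, Nat.cast_sub (by omega)]
  push_cast
  ring

/-- on each level set of `φ`, the sum of regularized virtual
costs equals the sum of virtual costs. -/
theorem stmt3 (m : ℕ) (hm : 1 ≤ m) (c : ℕ → ℝ) (hc0 : c 0 = 0)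
    (hmono : ∀ i j, i ≤ j → j ≤ m → c i ≤ c j)
    (i : ℕ) (hi : 1 ≤ i) (him : i ≤ m) :
    ∑ j ∈ (Finset.Icc 1 m).filter (fun j => rvc m c j = rvc m c i), rvc m c j =
      ∑ j ∈ (Finset.Icc 1 m).filter (fun j => rvc m c j = rvc m c i), vc c j :=
  stmt3_general m c i hi him
end

section
/- For any monotone non-increasing allocation A : {1, ..., n} → [0, 1] (i.e., A_j ≥ A_{j+1} for all j < n), the expected virtual cost under the uniform distribution on the subset is at most that under the uniform distribution on the full set: Σ_{k=1}^{i} A_{p_k}·ψ^i_k ≤ Σ_{j=1}^{n} A_j·ψ_j. -/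
/-!
Put the subset's virtual costs on the positions `1, …, n`: `φ (p k) = ψ^i_k`, and `φ j = 0` when
`j` is not among the `p k`. Both sides become `∑ j, A j * φ j` and `∑ j, A j * ψ j`, and by Abel
summation, for nonnegative nonincreasing `A` it suffices to compare prefix sums. Both telescope:
`∑_{j ≤ t} ψ j = t * c t` and `∑_{j ≤ t} φ j = m * c (p m)`, where `m` is the number of `p k ≤ t`.
Since `m ≤ p m ≤ t` and `c` is nonnegative and nondecreasing, `m * c (p m) ≤ t * c t`.
-/

open Finset

/-- Virtual cost of the uniform distribution over the subset
`{c (p 1), …, c (p i)}`: `ψ^i_k = k·c_{p_k} − (k−1)·c_{p_{k−1}}`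
(the `k = 1` term is `c_{p_1}`). -/
noncomputable def vcSub (c : ℕ → ℝ) (p : ℕ → ℕ) (k : ℕ) : ℝ :=
  (k : ℝ) * c (p k) - ((k : ℝ) - 1) * c (p (k - 1))

theorem sum_mul_le_sum_mul_of_antitoneOn {A φ ψ : ℕ → ℝ} {n : ℕ}
    (hA : AntitoneOn A (Set.Icc 1 n)) (hA0 : ∀ j ∈ Set.Icc 1 n, 0 ≤ A j)
    (h : ∀ t ≤ n, ∑ j ∈ Icc 1 t, φ j ≤ ∑ j ∈ Icc 1 t, ψ j) :
    ∑ j ∈ Icc 1 n, A j * φ j ≤ ∑ j ∈ Icc 1 n, A j * ψ j := by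
  induction n generalizing A with
  | zero => simp
  | succ n ih =>
    have hlast : n + 1 ∈ Set.Icc 1 (n + 1) := ⟨by omega, le_rfl⟩
    have split : ∀ χ : ℕ → ℝ, ∑ j ∈ Icc 1 (n + 1), A j * χ j =
        ∑ j ∈ Icc 1 n, (A j - A (n + 1)) * χ j + A (n + 1) * ∑ j ∈ Icc 1 (n + 1), χ j := by
      intro χ
      simp only [sum_Icc_succ_top (by omega : 1 ≤ n + 1), mul_add, mul_sum, sub_mul,
        sum_sub_distrib]
      ring
    have hsub : Set.Icc 1 n ⊆ Set.Icc 1 (n + 1) := Set.Icc_subset_Icc_right n.le_succ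
    rw [split φ, split ψ]
    gcongr ?_ + ?_
    · refine ih (fun a ha b hb hab => sub_le_sub_right (hA (hsub ha) (hsub hb) hab) _)
        (fun j hj => sub_nonneg.2 (hA (hsub hj) hlast (hj.2.trans n.le_succ))) ?_
      exact fun t ht => h t (ht.trans n.le_succ)
    · exact mul_le_mul_of_nonneg_left (h _ le_rfl) (hA0 _ hlast)

theorem sum_Icc_mul_sub_mul_pred (f : ℕ → ℝ) (t : ℕ) :
    ∑ j ∈ Icc 1 t, ((j : ℝ) * f j - ((j : ℝ) - 1) * f (j - 1)) = t * f t := by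
  induction t with
  | zero => simp
  | succ t ih =>
    rw [sum_Icc_succ_top (by omega), ih, Nat.add_sub_cancel]
    push_cast
    ring

theorem sum_Icc_vc (c : ℕ → ℝ) (t : ℕ) : ∑ j ∈ Icc 1 t, vc c j = t * c t :=
  sum_Icc_mul_sub_mul_pred c t

theorem sum_Icc_vcSub (c : ℕ → ℝ) (p : ℕ → ℕ) (m : ℕ) :
    ∑ k ∈ Icc 1 m, vcSub c p k = m * c (p m) :=
  sum_Icc_mul_sub_mul_pred (c ∘ p) m

theorem filter_Icc_one_eq_Icc_findGreatest {P : ℕ → Prop} [DecidablePred P] {i : ℕ}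
    (hP : ∀ a b, 1 ≤ a → a ≤ b → b ≤ i → P b → P a) :
    (Icc 1 i).filter P = Icc 1 (Nat.findGreatest P i) := by
  ext k
  simp only [mem_filter, mem_Icc]
  constructor
  · rintro ⟨⟨hk1, hki⟩, hPk⟩
    exact ⟨hk1, Nat.le_findGreatest hki hPk⟩
  · rintro ⟨hk1, hkm⟩
    have hm : Nat.findGreatest P i ≤ i := Nat.findGreatest_le i
    have hPm : P (Nat.findGreatest P i) := Nat.findGreatest_of_ne_zero rfl (by omega)
    exact ⟨⟨hk1, hkm.trans hm⟩, hP k _ hk1 hkm hm hPm⟩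

theorem StrictMonoOn.le_apply_of_mem_Icc_one {p : ℕ → ℕ} {i : ℕ}
    (hp : StrictMonoOn p (Set.Icc 1 i)) (hp1 : 1 ≤ p 1) :
    ∀ k ∈ Set.Icc 1 i, k ≤ p k := by
  intro k hk
  induction k with
  | zero => exact absurd hk.1 (by omega)
  | succ k ih =>
    rcases Nat.eq_zero_or_pos k with rfl | hk0
    · exact hp1
    · have hk' : k ∈ Set.Icc 1 i := ⟨hk0, k.le_succ.trans hk.2⟩
      exact (ih hk').trans_lt (hp hk' hk k.lt_succ_self)

noncomputable def vcSubAt (c : ℕ → ℝ) (p : ℕ → ℕ) (i j : ℕ) : ℝ :=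
  ∑ k ∈ Icc 1 i with p k = j, vcSub c p k

theorem sum_mul_vcSubAt (c w : ℕ → ℝ) (p : ℕ → ℕ) (i : ℕ) (s : Finset ℕ) :
    ∑ j ∈ s, w j * vcSubAt c p i j = ∑ k ∈ Icc 1 i with p k ∈ s, w (p k) * vcSub c p k := by
  simp only [vcSubAt, mul_sum, sum_filter]
  rw [sum_comm]
  refine sum_congr rfl fun k _ => ?_
  simp only [mul_ite, mul_zero]
  exact sum_ite_eq s (p k) fun j => w j * vcSub c p k

theorem sum_Icc_vcSubAt_le {c : ℕ → ℝ} {p : ℕ → ℕ} {i t : ℕ} (hc0 : 0 ≤ c 0)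
    (hc : MonotoneOn c (Set.Iic t)) (hp : StrictMonoOn p (Set.Icc 1 i)) (hp1 : 1 ≤ p 1) :
    ∑ j ∈ Icc 1 t, vcSubAt c p i j ≤ t * c t := by
  have hle := hp.le_apply_of_mem_Icc_one hp1
  have hfilter : (Icc 1 i).filter (fun k => p k ∈ Icc 1 t) = (Icc 1 i).filter (p · ≤ t) :=
    filter_congr fun k hk => by
      rw [mem_Icc] at hk ⊢
      have := hle k hk
      omega
  set m := Nat.findGreatest (p · ≤ t) i
  have hm : (Icc 1 i).filter (p · ≤ t) = Icc 1 m :=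
    filter_Icc_one_eq_Icc_findGreatest fun a b ha hab hb hpb =>
      (hp.monotoneOn ⟨ha, hab.trans hb⟩ ⟨ha.trans hab, hb⟩ hab).trans hpb
  have hsum := sum_mul_vcSubAt c 1 p i (Icc 1 t)
  simp only [Pi.one_apply, one_mul] at hsum
  rw [hsum, hfilter, hm, sum_Icc_vcSub]
  rcases Nat.eq_zero_or_pos m with hm0 | hm0
  · rw [hm0, Nat.cast_zero, zero_mul]
    exact mul_nonneg t.cast_nonneg (hc0.trans (hc (Nat.zero_le t) (le_refl t) (Nat.zero_le t)))
  have hmi : m ≤ i := Nat.findGreatest_le i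
  have hpm : p m ≤ t := Nat.findGreatest_of_ne_zero (P := (p · ≤ t)) rfl hm0.ne'
  have hmpm : m ≤ p m := hle m ⟨hm0, hmi⟩
  exact mul_le_mul (by exact_mod_cast hmpm.trans hpm) (hc hpm (le_refl t) hpm)
    (hc0.trans (hc (Nat.zero_le _) hpm (Nat.zero_le _))) (Nat.cast_nonneg t)

theorem stmt7_general (n i : ℕ)
    (c : ℕ → ℝ) (hc0 : c 0 = 0) (hmono : ∀ a b, a ≤ b → b ≤ n → c a ≤ c b)
    (p : ℕ → ℕ) (hp1 : 1 ≤ p 1) (hpn : p i ≤ n)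
    (hpmono : ∀ a b, 1 ≤ a → a < b → b ≤ i → p a < p b)
    (A : ℕ → ℝ) (hA : ∀ j, 1 ≤ j → j ≤ n → 0 ≤ A j ∧ A j ≤ 1)
    (hAmono : ∀ j, 1 ≤ j → j < n → A (j + 1) ≤ A j) :
    ∑ k ∈ Finset.Icc 1 i, A (p k) * vcSub c p k ≤
      ∑ j ∈ Finset.Icc 1 n, A j * vc c j := by
  have hc : MonotoneOn c (Set.Iic n) := fun a _ b hb hab => hmono a b hab hb
  have hp : StrictMonoOn p (Set.Icc 1 i) := fun a ha b hb hab => hpmono a b ha.1 hab hb.2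
  have hpIcc : ∀ k ∈ Icc 1 i, p k ∈ Icc 1 n := fun k hk => by
    rw [mem_Icc] at hk ⊢
    exact ⟨hk.1.trans (hp.le_apply_of_mem_Icc_one hp1 k hk),
      (hp.monotoneOn hk ⟨hk.1.trans hk.2, le_rfl⟩ hk.2).trans hpn⟩
  have hAanti : AntitoneOn A (Set.Icc 1 n) :=
    antitoneOn_of_succ_le Set.ordConnected_Icc fun j _ hj hj1 =>
      hAmono j hj.1 (Order.succ_le_iff.1 hj1.2)
  calc ∑ k ∈ Icc 1 i, A (p k) * vcSub c p k
      = ∑ j ∈ Icc 1 n, A j * vcSubAt c p i j := by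
        rw [sum_mul_vcSubAt, filter_true_of_mem hpIcc]
    _ ≤ ∑ j ∈ Icc 1 n, A j * vc c j := by
        refine sum_mul_le_sum_mul_of_antitoneOn hAanti (fun j hj => (hA j hj.1 hj.2).1)
          fun t ht => ?_
        rw [sum_Icc_vc]
        exact sum_Icc_vcSubAt_le hc0.ge (hc.mono (Set.Iic_subset_Iic.2 ht)) hp hp1

/-- for any monotone non-increasing allocation `A` with values in
`[0,1]`, the expected virtual cost under the uniform distribution on the subset
is at most that under the uniform distribution on the full set. -/
theorem stmt7 (n i : ℕ) (hi : 1 ≤ i) (hin : i ≤ n)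
    (c : ℕ → ℝ) (hc0 : c 0 = 0) (hmono : ∀ a b, a ≤ b → b ≤ n → c a ≤ c b)
    (p : ℕ → ℕ) (hp1 : 1 ≤ p 1) (hpn : p i ≤ n)
    (hpmono : ∀ a b, 1 ≤ a → a < b → b ≤ i → p a < p b)
    (A : ℕ → ℝ) (hA : ∀ j, 1 ≤ j → j ≤ n → 0 ≤ A j ∧ A j ≤ 1)
    (hAmono : ∀ j, 1 ≤ j → j < n → A (j + 1) ≤ A j) :
    ∑ k ∈ Finset.Icc 1 i, A (p k) * vcSub c p k ≤
      ∑ j ∈ Finset.Icc 1 n, A j * vc c j :=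
  stmt7_general n i c hc0 hmono p hp1 hpn hpmono A hA hAmono
end
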